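/- arXiv:2402.05640 — 2 statements merged into one kernel-verified Lean document; each statement's English description precedes it below -/
import Mathlib

section
/- Let u : ℝ² → ℝ be harmonic with u(0) = 0, and for R > 0 let M(u;R) = sup_{|x| ≤ R} |u(x)|. Suppose M(u;R) = o(R) as R → ∞. Writing u in polar coordinates, u(r,θ) = Σ_{m∈ℤ, m≠0} c_{m,R} (r/R)^{|m|} e^{imθ} for 0 ≤ r ≤ R, where c_{m,R} are the Fourier coefficients of θ ↦ u(R,θ). Then for any fixed R₀ > 0, the L² norm of u on the ball B_{R₀}(0) is zero, hence u ≡ 0. -/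
open scoped BigOperators

/-- The Euclidean Laplacian on `ℝ²`. -/
noncomputable def euclLaplacian2 (u : EuclideanSpace ℝ (Fin 2) → ℝ)
    (x : EuclideanSpace ℝ (Fin 2)) : ℝ :=
  ∑ i : Fin 2, fderiv ℝ (fun y => fderiv ℝ u y (EuclideanSpace.single i (1:ℝ))) x
    (EuclideanSpace.single i (1:ℝ))

namespace LiouvilleAux

open Complex Metric MeasureTheory intervalIntegral

noncomputable section

abbrev E2 := EuclideanSpace ℝ (Fin 2)

noncomputable def eC : ℂ ≃ₗᵢ[ℝ] E2 :=
  Complex.isometryOfOrthonormal (EuclideanSpace.basisFun (Fin 2) ℝ)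

noncomputable def eCL : ℂ →L[ℝ] E2 := eC.toContinuousLinearEquiv.toContinuousLinearMap

def E0 : E2 := EuclideanSpace.single 0 (1:ℝ)
def E1 : E2 := EuclideanSpace.single 1 (1:ℝ)

lemma eCL_apply (z : ℂ) : eCL z = eC z := rfl

lemma hasFDerivAt_eC (z : ℂ) : HasFDerivAt (fun w => eC w) eCL z :=
  eC.toContinuousLinearEquiv.hasFDerivAt

/-- multiplication by `c` as a real-linear map on `ℂ` -/
noncomputable def mulR (c : ℂ) : ℂ →L[ℝ] ℂ := (ContinuousLinearMap.mul ℝ ℂ) c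
noncomputable def mulL (c : ℂ) : ℂ →L[ℂ] ℂ := c • ContinuousLinearMap.id ℂ ℂ

@[simp] lemma mulR_apply (c w : ℂ) : mulR c w = c * w := rfl
@[simp] lemma mulL_apply (c w : ℂ) : mulL c w = c * w := by
  simp [mulL, smul_eq_mul]

lemma restrict_mulL (c : ℂ) : (mulL c).restrictScalars ℝ = mulR c := by
  ext w; simp

lemma norm_mulR_le (c : ℂ) : ‖mulR c‖ ≤ ‖c‖ := by
  refine ContinuousLinearMap.opNorm_le_bound _ (norm_nonneg c) fun w => ?_
  simp [norm_mul]

lemma clm_ext_complex {T S : ℂ →L[ℝ] ℂ} (h1 : T 1 = S 1) (hI : T I = S I) : T = S := by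
  ext w
  have hw : w = w.re • (1:ℂ) + w.im • I := by
    simp only [Complex.real_smul]
    rw [mul_one, Complex.re_add_im]
  calc T w = T (w.re • (1:ℂ) + w.im • I) := by rw [← hw]
    _ = w.re • T 1 + w.im • T I := by rw [map_add, T.map_smul, T.map_smul]
    _ = w.re • S 1 + w.im • S I := by rw [h1, hI]
    _ = S w := by rw [← S.map_smul, ← S.map_smul, ← map_add, ← hw]

lemma eC_one : eC 1 = E0 := by
  have h0 : (Complex.orthonormalBasisOneI : Fin 2 → ℂ) 0 = 1 := by simp
  have h : eC (Complex.orthonormalBasisOneI 0) = (EuclideanSpace.basisFun (Fin 2) ℝ) 0 := by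
    simp only [eC, Complex.isometryOfOrthonormal, LinearIsometryEquiv.trans_apply,
      OrthonormalBasis.repr_self, OrthonormalBasis.repr_symm_single]
  rw [h0] at h
  rw [h]; simp [E0, EuclideanSpace.basisFun_apply]

lemma eC_I : eC I = E1 := by
  have h1 : (Complex.orthonormalBasisOneI : Fin 2 → ℂ) 1 = I := by simp
  have h : eC (Complex.orthonormalBasisOneI 1) = (EuclideanSpace.basisFun (Fin 2) ℝ) 1 := by
    simp only [eC, Complex.isometryOfOrthonormal, LinearIsometryEquiv.trans_apply,
      OrthonormalBasis.repr_self, OrthonormalBasis.repr_symm_single]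
  rw [h1] at h
  rw [h]; simp [E1, EuclideanSpace.basisFun_apply]

lemma eC_apply (z : ℂ) : eC z = z.re • E0 + z.im • E1 := by
  have h : z = z.re • (1:ℂ) + z.im • I := by
    simp only [Complex.real_smul]
    rw [mul_one, Complex.re_add_im]
  conv_lhs => rw [h]
  rw [map_add, LinearIsometryEquiv.map_smul, LinearIsometryEquiv.map_smul, eC_one, eC_I]

variable (u : E2 → ℝ)

/-- The (would-be holomorphic) complex gradient `∂u/∂x - i ∂u/∂y` read through `eC`. -/
noncomputable def gC : ℂ → ℂ :=
  fun z => (fderiv ℝ u (eC z) E0 : ℝ) • (1:ℂ) + (fderiv ℝ u (eC z) E1 : ℝ) • (-I)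

lemma gC_def (z : ℂ) :
    gC u z = ((fderiv ℝ u (eC z) E0 : ℝ) : ℂ) - ((fderiv ℝ u (eC z) E1 : ℝ) : ℂ) * I := by
  simp [gC, Complex.real_smul]; ring

lemma g_entire (hreg : ContDiff ℝ 2 u) (hharm : ∀ x, euclLaplacian2 u x = 0) :
    Differentiable ℂ (gC u) := by
  intro z
  set Du := fderiv ℝ u with hDu_def
  have hDu : ContDiff ℝ 1 Du := hreg.fderiv_right (by norm_num)
  set H := fderiv ℝ Du (eC z) with hH_def
  have hH : HasFDerivAt Du H (eC z) := ((hDu.differentiable (by norm_num)) (eC z)).hasFDerivAt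
  have hcomp : HasFDerivAt (fun w => Du (eC w)) (H.comp eCL) z :=
    hH.comp z (hasFDerivAt_eC z)
  have hd0 : HasFDerivAt (fun w => Du (eC w) E0)
      ((ContinuousLinearMap.apply ℝ ℝ E0).comp (H.comp eCL)) z :=
    (ContinuousLinearMap.apply ℝ ℝ E0).hasFDerivAt.comp z hcomp
  have hd1 : HasFDerivAt (fun w => Du (eC w) E1)
      ((ContinuousLinearMap.apply ℝ ℝ E1).comp (H.comp eCL)) z :=
    (ContinuousLinearMap.apply ℝ ℝ E1).hasFDerivAt.comp z hcomp
  set G : ℂ →L[ℝ] ℂ :=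
    (((ContinuousLinearMap.apply ℝ ℝ E0).comp (H.comp eCL)).smulRight (1:ℂ)) +
    (((ContinuousLinearMap.apply ℝ ℝ E1).comp (H.comp eCL)).smulRight (-I)) with hG_def
  have hg : HasFDerivAt (gC u) G z := by
    exact (hd0.smul_const (1:ℂ)).add (hd1.smul_const (-I))
  have hsymm : H E1 E0 = H E0 E1 := by
    exact second_derivative_symmetric
      (fun y => ((hreg.differentiable (by norm_num)) y).hasFDerivAt) hH E1 E0
  have htr : H E0 E0 + H E1 E1 = 0 := by
    have h := hharm (eC z)
    unfold euclLaplacian2 at h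
    have hfd : ∀ i : Fin 2, fderiv ℝ (fun y => fderiv ℝ u y (EuclideanSpace.single i (1:ℝ)))
        (eC z) = (ContinuousLinearMap.apply ℝ ℝ (EuclideanSpace.single i (1:ℝ))).comp H := by
      intro i
      exact ((ContinuousLinearMap.apply ℝ ℝ (EuclideanSpace.single i (1:ℝ))).hasFDerivAt.comp
        (eC z) hH).fderiv
    rw [Fin.sum_univ_two, hfd 0, hfd 1] at h
    simpa [E0, E1] using h
  have hG1 : G 1 = ((H E0 E0 : ℝ) : ℂ) + (H E0 E1 : ℝ) • (-I) := by
    simp [hG_def, eCL_apply, eC_one]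
  have hGI : G I = ((H E1 E0 : ℝ) : ℂ) + (H E1 E1 : ℝ) • (-I) := by
    simp [hG_def, eCL_apply, eC_I]
  have hlin : (mulL (G 1)).restrictScalars ℝ = G := by
    rw [restrict_mulL]
    refine clm_ext_complex ?_ ?_
    · simp [hG1]
    · rw [mulR_apply, hG1, hGI]
      apply Complex.ext
      · simp [Complex.real_smul, hsymm]
      · simp [Complex.real_smul]
        linarith [htr]
  exact (hasFDerivAt_of_restrictScalars ℝ hg hlin).differentiableAt

/-- The primitive `f(z) = ∫₀¹ z g(tz) dt` of an entire function `g`. -/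
noncomputable def prim (g : ℂ → ℂ) : ℂ → ℂ := fun z => ∫ t in (0:ℝ)..1, z * g ((t:ℂ) * z)

lemma hasFDerivAt_param (g : ℂ → ℂ) (t : ℝ) (z : ℂ) (hg : Differentiable ℂ g) :
    HasFDerivAt (fun x => x * g ((t:ℂ) * x))
      (mulR (g ((t:ℂ)*z) + (t:ℂ) * z * deriv g ((t:ℂ)*z))) z := by
  have hinner : HasDerivAt (fun x : ℂ => (t:ℂ) * x) ((t:ℂ)) z := by
    simpa using (hasDerivAt_id z).const_mul (t:ℂ)
  have hgd : HasDerivAt g (deriv g ((t:ℂ)*z)) ((t:ℂ)*z) := (hg _).hasDerivAt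
  have hcomp : HasDerivAt (fun x : ℂ => g ((t:ℂ)*x)) (deriv g ((t:ℂ)*z) * (t:ℂ)) z :=
    hgd.comp z hinner
  have hmul : HasDerivAt (fun x : ℂ => x * g ((t:ℂ)*x))
      (1 * g ((t:ℂ)*z) + z * (deriv g ((t:ℂ)*z) * (t:ℂ))) z :=
    (hasDerivAt_id z).mul hcomp
  have h2 : HasDerivAt (fun x : ℂ => x * g ((t:ℂ)*x))
      (g ((t:ℂ)*z) + (t:ℂ) * z * deriv g ((t:ℂ)*z)) z := by
    convert hmul using 1; ring
  have h3 := h2.hasFDerivAt.restrictScalars ℝ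
  refine HasFDerivAt.congr_fderiv h3 ?_
  ext w
  simp [mul_comm]

lemma prim_differentiable (g : ℂ → ℂ) (hg : Differentiable ℂ g) :
    Differentiable ℂ (prim g) := by
  intro z₀
  have hgc : Continuous g := hg.continuous
  have hA : AnalyticOnNhd ℂ g Set.univ := fun x _ => hg.analyticAt x
  have hg'd : Differentiable ℂ (deriv g) := fun x => (hA.deriv x trivial).differentiableAt
  have hg'c : Continuous (deriv g) := hg'd.continuous
  set A : ℝ := ‖z₀‖ + 1 with hA_def
  have hA0 : 0 < A := by positivity
  obtain ⟨C1, hC1⟩ := (isCompact_closedBall (0:ℂ) A).exists_bound_of_continuousOn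
    hgc.continuousOn
  obtain ⟨C2, hC2⟩ := (isCompact_closedBall (0:ℂ) A).exists_bound_of_continuousOn
    hg'c.continuousOn
  have hC1_0 : 0 ≤ C1 := le_trans (norm_nonneg _) (hC1 0 (by simp [hA0.le]))
  have hC2_0 : 0 ≤ C2 := le_trans (norm_nonneg _) (hC2 0 (by simp [hA0.le]))
  set Cb : ℝ := C1 + A * C2 with hCb_def
  set cval : ℝ → ℂ := fun t => g ((t:ℂ)*z₀) + (t:ℂ) * z₀ * deriv g ((t:ℂ)*z₀) with hcval
  have hcval_cont : Continuous cval := by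
    apply Continuous.add
    · exact hgc.comp (continuous_ofReal.mul continuous_const)
    · exact ((continuous_ofReal.mul continuous_const).mul
        (hg'c.comp (continuous_ofReal.mul continuous_const)))
  have key := hasFDerivAt_integral_of_dominated_loc_of_lip_interval
    (F := fun x t => x * g ((t:ℂ) * x)) (F' := fun t => mulR (cval t))
    (μ := MeasureTheory.volume) (a := (0:ℝ)) (b := 1) (x₀ := z₀)
    (bound := fun _ => Cb) (s := Metric.ball z₀ 1) (ball_mem_nhds z₀ one_pos)
    ?_ ?_ ?_ ?_ ?_ ?_
  · obtain ⟨hint, hmain⟩ := key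
    have hInt : IntervalIntegrable cval MeasureTheory.volume 0 1 :=
      hcval_cont.intervalIntegrable 0 1
    have hcc : (∫ t in (0:ℝ)..1, mulR (cval t)) = mulR (∫ t in (0:ℝ)..1, cval t) :=
      (ContinuousLinearMap.mul ℝ ℂ).intervalIntegral_comp_comm hInt
    rw [hcc] at hmain
    exact (hasFDerivAt_of_restrictScalars ℝ hmain (restrict_mulL _)).differentiableAt
  · exact Filter.Eventually.of_forall fun x =>
      (continuous_const.mul
        (hgc.comp (continuous_ofReal.mul continuous_const))).aestronglyMeasurable
  · exact (continuous_const.mul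
      (hgc.comp (continuous_ofReal.mul continuous_const))).intervalIntegrable 0 1
  · exact ((ContinuousLinearMap.mul ℝ ℂ).continuous.comp hcval_cont).aestronglyMeasurable
  · refine Filter.Eventually.mono (ae_restrict_mem measurableSet_uIoc) fun t ht => ?_
    rw [Set.uIoc_of_le (by norm_num : (0:ℝ) ≤ 1)] at ht
    have ht1 : |t| ≤ 1 := by
      rw [abs_le]; constructor <;> [linarith [ht.1]; linarith [ht.2]]
    refine (convex_ball z₀ 1).lipschitzOnWith_of_nnnorm_hasFDerivWithin_le
      (f' := fun x => mulR (g ((t:ℂ)*x) + (t:ℂ) * x * deriv g ((t:ℂ)*x)))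
      (fun x hx => (hasFDerivAt_param g t x hg).hasFDerivWithinAt) fun x hx => ?_
    have hxA : ‖x‖ ≤ A := by
      have hx' := mem_ball_iff_norm.mp hx
      calc ‖x‖ = ‖z₀ + (x - z₀)‖ := by ring_nf
        _ ≤ ‖z₀‖ + ‖x - z₀‖ := norm_add_le _ _
        _ ≤ ‖z₀‖ + 1 := by linarith
    have htxA : ‖(t:ℂ)*x‖ ≤ A := by
      rw [norm_mul, Complex.norm_real, Real.norm_eq_abs]
      calc |t| * ‖x‖ ≤ 1 * A := mul_le_mul ht1 hxA (norm_nonneg _) zero_le_one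
        _ = A := one_mul A
    have hb : ‖g ((t:ℂ)*x) + (t:ℂ) * x * deriv g ((t:ℂ)*x)‖ ≤ Cb := by
      calc ‖g ((t:ℂ)*x) + (t:ℂ) * x * deriv g ((t:ℂ)*x)‖
          ≤ ‖g ((t:ℂ)*x)‖ + ‖(t:ℂ) * x‖ * ‖deriv g ((t:ℂ)*x)‖ := by
            refine (norm_add_le _ _).trans ?_
            rw [norm_mul]
        _ ≤ C1 + A * C2 := by
            have h1 := hC1 _ (mem_closedBall_zero_iff.mpr htxA)
            have h2 := hC2 _ (mem_closedBall_zero_iff.mpr htxA)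
            have h3 : ‖(t:ℂ)*x‖ * ‖deriv g ((t:ℂ)*x)‖ ≤ A * C2 :=
              mul_le_mul htxA h2 (norm_nonneg _) hA0.le
            linarith
    have hfin : ‖mulR (g ((t:ℂ)*x) + (t:ℂ) * x * deriv g ((t:ℂ)*x))‖ ≤ |Cb| :=
      le_trans (le_trans (norm_mulR_le _) hb) (le_abs_self _)
    refine NNReal.coe_le_coe.mp ?_
    rw [coe_nnnorm, Real.coe_nnabs]
    exact hfin
  · exact intervalIntegrable_const
  · exact Filter.Eventually.of_forall fun t => hasFDerivAt_param g t z₀ hg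

lemma deriv_eq_zero_of_re_sublinear (f : ℂ → ℂ) (hf : Differentiable ℂ f) (v : ℂ → ℝ)
    (hre : ∀ z, (f z).re = v z)
    (hsub : ∀ ε : ℝ, 0 < ε → ∃ R₁ : ℝ, ∀ R, R₁ ≤ R → ∀ z : ℂ, ‖z‖ ≤ R → |v z| ≤ ε * R)
    (c : ℂ) : deriv f c = 0 := by
  have key : ∀ ε : ℝ, 0 < ε → ‖deriv f c‖ ≤ ε * Real.exp 3 := by
    intro ε hε
    obtain ⟨R₁, hR₁⟩ := hsub ε hε
    set R : ℝ := max (max R₁ 1) (max ‖c‖ (|v c| / ε)) with hR_def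
    have hR1 : (1:ℝ) ≤ R := le_trans (le_max_right R₁ 1) (le_max_left _ _)
    have hR0 : (0:ℝ) < R := lt_of_lt_of_le one_pos hR1
    have hRR₁ : R₁ ≤ R := le_trans (le_max_left R₁ 1) (le_max_left _ _)
    have hRc : ‖c‖ ≤ R := le_trans (le_max_left ‖c‖ _) (le_max_right _ _)
    have hRv : |v c| / ε ≤ R := le_trans (le_max_right ‖c‖ _) (le_max_right _ _)
    set s : ℝ := 1 / (ε * R) with hs_def
    have hs0 : 0 < s := by positivity
    set F : ℂ → ℂ := fun z => Complex.exp ((s:ℂ) * f z) with hF_def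
    have hFdiff : Differentiable ℂ F := ((differentiable_const _).mul hf).cexp
    have hC : ∀ z ∈ Metric.sphere c R, ‖F z‖ ≤ Real.exp 2 := by
      intro z hz
      have hzn : ‖z‖ ≤ ‖c‖ + R := by
        have hzc : ‖z - c‖ = R := mem_sphere_iff_norm.mp hz
        calc ‖z‖ = ‖c + (z - c)‖ := by ring_nf
          _ ≤ ‖c‖ + ‖z - c‖ := norm_add_le _ _
          _ = ‖c‖ + R := by rw [hzc]
      have hvz : |v z| ≤ ε * (‖c‖ + R) := by
        refine hR₁ (‖c‖ + R) ?_ z hzn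
        have : (0:ℝ) ≤ ‖c‖ := norm_nonneg c
        linarith
      have hFz : ‖F z‖ = Real.exp (s * v z) := by
        rw [hF_def]
        simp only []
        rw [Complex.norm_exp]
        congr 1
        have h1 : ((s:ℂ) * f z).re = s * (f z).re := by
          simp [Complex.mul_re]
        rw [h1, hre]
      rw [hFz]
      apply Real.exp_le_exp.mpr
      have h1 : s * v z ≤ s * (ε * (‖c‖ + R)) :=
        mul_le_mul_of_nonneg_left (le_trans (le_abs_self _) hvz) hs0.le
      have h2 : s * (ε * (‖c‖ + R)) = (‖c‖ + R) / R := by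
        rw [hs_def]; field_simp
      have h3 : (‖c‖ + R) / R ≤ 2 := by
        rw [div_le_iff₀ hR0]; linarith
      linarith
    have hd : DiffContOnCl ℂ F (Metric.ball c R) := hFdiff.diffContOnCl
    have hder := Complex.norm_deriv_le_of_forall_mem_sphere_norm_le hR0 hd hC
    have hFd : HasDerivAt F (Complex.exp ((s:ℂ) * f c) * ((s:ℂ) * deriv f c)) c := by
      have h1 : HasDerivAt (fun z => (s:ℂ) * f z) ((s:ℂ) * deriv f c) c :=
        ((hf c).hasDerivAt).const_mul (s:ℂ)
      exact h1.cexp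
    have hderivF : deriv F c = Complex.exp ((s:ℂ) * f c) * ((s:ℂ) * deriv f c) := hFd.deriv
    have hnorm : Real.exp (s * v c) * (s * ‖deriv f c‖) ≤ Real.exp 2 / R := by
      have h1 : ‖deriv F c‖ = Real.exp (s * v c) * (s * ‖deriv f c‖) := by
        rw [hderivF, norm_mul, norm_mul, Complex.norm_exp]
        have h2 : ((s:ℂ) * f c).re = s * (f c).re := by simp [Complex.mul_re]
        rw [h2, hre, Complex.norm_real, Real.norm_eq_abs, abs_of_pos hs0]
      rw [← h1]; exact hder
    have hexpvc : Real.exp (-(s * v c)) ≤ Real.exp 1 := by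
      apply Real.exp_le_exp.mpr
      have h1 : -(s * v c) ≤ s * |v c| := by
        have h2 := neg_abs_le (v c)
        have h3 : s * (-(|v c|)) ≤ s * v c := mul_le_mul_of_nonneg_left h2 hs0.le
        linarith
      have h3 : s * |v c| ≤ 1 := by
        rw [hs_def]
        rw [div_mul_eq_mul_div, one_mul, div_le_one (by positivity)]
        calc |v c| = (|v c| / ε) * ε := by field_simp
          _ ≤ R * ε := mul_le_mul_of_nonneg_right hRv hε.le
          _ = ε * R := mul_comm _ _
      linarith
    have e1 : ‖deriv f c‖ = Real.exp (-(s * v c)) * (Real.exp (s * v c) * ‖deriv f c‖) := by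
      rw [← mul_assoc, ← Real.exp_add]; simp
    have e2 : Real.exp (s * v c) * ‖deriv f c‖ ≤ Real.exp 2 / (R * s) := by
      rw [le_div_iff₀ (by positivity)]
      calc Real.exp (s * v c) * ‖deriv f c‖ * (R * s)
          = (Real.exp (s * v c) * (s * ‖deriv f c‖)) * R := by ring
        _ ≤ (Real.exp 2 / R) * R := mul_le_mul_of_nonneg_right hnorm hR0.le
        _ = Real.exp 2 := by field_simp
    have hRs : R * s = 1 / ε := by
      rw [hs_def]; field_simp
    rw [e1]
    calc Real.exp (-(s * v c)) * (Real.exp (s * v c) * ‖deriv f c‖)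
        ≤ Real.exp 1 * (Real.exp 2 / (R * s)) := by
          apply mul_le_mul hexpvc e2 _ (Real.exp_pos 1).le
          positivity
      _ = Real.exp 1 * (Real.exp 2 * ε) := by rw [hRs]; field_simp
      _ = ε * Real.exp 3 := by
          rw [show (3:ℝ) = 1 + 2 by norm_num, Real.exp_add]; ring
  by_contra h
  have hpos : 0 < ‖deriv f c‖ := norm_pos_iff.mpr h
  have hk := key (‖deriv f c‖ / (2 * Real.exp 3)) (by positivity)
  have hh : ‖deriv f c‖ / (2 * Real.exp 3) * Real.exp 3 = ‖deriv f c‖ / 2 := by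
    field_simp
  rw [hh] at hk
  linarith

lemma gC_continuous (hreg : ContDiff ℝ 2 u) : Continuous (gC u) := by
  have hDu : ContDiff ℝ 1 (fderiv ℝ u) := hreg.fderiv_right (by norm_num)
  have h1 : Continuous fun z : ℂ => fderiv ℝ u (eC z) :=
    hDu.continuous.comp eC.continuous
  have h2 : Continuous fun z : ℂ => fderiv ℝ u (eC z) E0 :=
    (ContinuousLinearMap.apply ℝ ℝ E0).continuous.comp h1
  have h3 : Continuous fun z : ℂ => fderiv ℝ u (eC z) E1 :=
    (ContinuousLinearMap.apply ℝ ℝ E1).continuous.comp h1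
  exact (h2.smul continuous_const).add (h3.smul continuous_const)

lemma re_prim (hreg : ContDiff ℝ 2 u) (z : ℂ) :
    (prim (gC u) z).re = u (eC z) - u 0 := by
  have hgcont : Continuous (gC u) := gC_continuous u hreg
  have hφcont : Continuous fun t : ℝ => z * gC u ((t:ℂ) * z) :=
    continuous_const.mul (hgcont.comp (continuous_ofReal.mul continuous_const))
  have hφint : IntervalIntegrable (fun t : ℝ => z * gC u ((t:ℂ) * z))
      MeasureTheory.volume 0 1 := hφcont.intervalIntegrable 0 1
  have hre : (prim (gC u) z).re = ∫ t in (0:ℝ)..1, (z * gC u ((t:ℂ) * z)).re := by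
    rw [prim]
    exact (Complex.reCLM.intervalIntegral_comp_comm hφint).symm
  rw [hre]
  have hderiv : ∀ t ∈ Set.uIcc (0:ℝ) 1,
      HasDerivAt (fun s : ℝ => u (eC ((s:ℂ) * z))) ((z * gC u ((t:ℂ) * z)).re) t := by
    intro t _
    have hs : HasDerivAt (fun s : ℝ => (s:ℂ) * z) z t := by
      simpa using (Complex.ofRealCLM.hasDerivAt (x := t)).mul_const z
    have heC : HasDerivAt (fun s : ℝ => eC ((s:ℂ) * z)) (eCL z) t :=
      (hasFDerivAt_eC ((t:ℂ) * z)).comp_hasDerivAt t hs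
    have hu' : HasFDerivAt u (fderiv ℝ u (eC ((t:ℂ) * z))) (eC ((t:ℂ) * z)) :=
      ((hreg.differentiable (by norm_num)) _).hasFDerivAt
    have hcompu : HasDerivAt (fun s : ℝ => u (eC ((s:ℂ) * z)))
        (fderiv ℝ u (eC ((t:ℂ) * z)) (eCL z)) t := hu'.comp_hasDerivAt t heC
    have halg : fderiv ℝ u (eC ((t:ℂ) * z)) (eCL z) = (z * gC u ((t:ℂ) * z)).re := by
      rw [eCL_apply, eC_apply z, map_add,
        (fderiv ℝ u (eC ((t:ℂ) * z))).map_smul, (fderiv ℝ u (eC ((t:ℂ) * z))).map_smul]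
      rw [gC_def]
      simp [Complex.mul_re, Complex.sub_re, Complex.sub_im, Complex.mul_im]
    rw [← halg]
    exact hcompu
  have hcont2 : IntervalIntegrable (fun t : ℝ => (z * gC u ((t:ℂ) * z)).re)
      MeasureTheory.volume 0 1 :=
    (Complex.continuous_re.comp hφcont).intervalIntegrable 0 1
  have := intervalIntegral.integral_eq_sub_of_hasDerivAt hderiv hcont2
  rw [this]
  norm_num

end
end LiouvilleAux

/-- A harmonic function on `ℝ²` with `u(0) = 0` and `M(u;R) = sup_{|x|≤R} |u| = o(R)`
has vanishing `L²` norm on every ball `B_{R₀}(0)`, hence `u ≡ 0`. -/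
theorem liouville_via_fourier (u : EuclideanSpace ℝ (Fin 2) → ℝ)
    (hreg : ContDiff ℝ 2 u) (hharm : ∀ x, euclLaplacian2 u x = 0)
    (h0 : u 0 = 0)
    (hsub : ∀ ε : ℝ, 0 < ε → ∃ R₁ : ℝ, ∀ R, R₁ ≤ R →
      ∀ x ∈ Metric.closedBall (0 : EuclideanSpace ℝ (Fin 2)) R, |u x| ≤ ε * R) :
    (∀ R₀ : ℝ, 0 < R₀ →
        ∫ x in Metric.closedBall (0 : EuclideanSpace ℝ (Fin 2)) R₀, (u x) ^ 2 = 0) ∧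
      ∀ x, u x = 0 := by
  have hg := LiouvilleAux.g_entire u hreg hharm
  set f := LiouvilleAux.prim (LiouvilleAux.gC u) with hf_def
  have hfd := LiouvilleAux.prim_differentiable _ hg
  have hre : ∀ z, (f z).re = u (LiouvilleAux.eC z) := by
    intro z
    rw [hf_def, LiouvilleAux.re_prim u hreg z, h0, sub_zero]
  have hsub' : ∀ ε : ℝ, 0 < ε → ∃ R₁ : ℝ, ∀ R, R₁ ≤ R → ∀ z : ℂ, ‖z‖ ≤ R →
      |u (LiouvilleAux.eC z)| ≤ ε * R := by
    intro ε hε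
    obtain ⟨R₁, hR₁⟩ := hsub ε hε
    refine ⟨R₁, fun R hR z hz => hR₁ R hR _ ?_⟩
    rw [Metric.mem_closedBall, dist_zero_right, LinearIsometryEquiv.norm_map]
    exact hz
  have hd0 : ∀ c, deriv f c = 0 :=
    LiouvilleAux.deriv_eq_zero_of_re_sublinear f hfd _ hre hsub'
  have hconst : ∀ z, f z = f 0 := fun z => is_const_of_deriv_eq_zero hfd hd0 z 0
  have hf0 : f 0 = 0 := by simp [hf_def, LiouvilleAux.prim]
  have hu0 : ∀ x, u x = 0 := by
    intro x
    have hx : x = LiouvilleAux.eC (LiouvilleAux.eC.symm x) :=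
      (LiouvilleAux.eC.apply_symm_apply x).symm
    rw [hx, ← hre, hconst, hf0]
    simp
  refine ⟨fun R₀ _ => ?_, hu0⟩
  simp [hu0]
end

section
/- Let g = dr² + φ(r,θ)² dθ² be a smooth metric on ℝ² (in polar-type coordinates) with φ > 0 for r > 0. Suppose that for r ≥ r₀ > 1 the Gauss curvature K_g(r,θ) = −φ''(r,θ)/φ(r,θ) satisfies K_g ≥ −1/(r² log r), where primes denote ∂/∂r. Then φ(r,θ) ≤ C(θ) · r log r for r ≥ r₀, for some function C(θ) depending only on φ and its r-derivative at r₀. -/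
/-- Comparison estimate: if the Gauss curvature `K = -φ''/φ` of the metric
`dr² + φ(r,θ)² dθ²` satisfies `K ≥ -1/(r² log r)` for `r ≥ r₀ > 1`, then the warping
function satisfies `φ(r,θ) ≤ C(θ) · r log r` for `r ≥ r₀`. -/
theorem warping_upper_bound (φ φ' φ'' : ℝ → ℝ → ℝ) (r₀ : ℝ) (hr₀ : 1 < r₀)
    (hpos : ∀ θ r, 0 < r → 0 < φ r θ)
    (hd1 : ∀ θ r, 0 < r → HasDerivAt (fun s => φ s θ) (φ' r θ) r)
    (hd2 : ∀ θ r, 0 < r → HasDerivAt (fun s => φ' s θ) (φ'' r θ) r)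
    (hcont : ∀ θ, ContinuousOn (fun r => φ'' r θ) (Set.Ioi 0))
    (hcurv : ∀ θ r, r₀ ≤ r →
      -(φ'' r θ) / φ r θ ≥ -(1 / (r ^ 2 * Real.log r))) :
    ∃ C : ℝ → ℝ, ∀ θ r, r₀ ≤ r → φ r θ ≤ C θ * (r * Real.log r) := by
  have hlog₀ : 0 < Real.log r₀ := Real.log_pos hr₀
  have hr₀pos : (0:ℝ) < r₀ := by linarith
  refine ⟨fun θ => max (φ r₀ θ / (r₀ * Real.log r₀)) (φ' r₀ θ / (Real.log r₀ + 1)) + 1, ?_⟩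
  intro θ r hr
  set C : ℝ := max (φ r₀ θ / (r₀ * Real.log r₀)) (φ' r₀ θ / (Real.log r₀ + 1)) + 1 with hC
  -- the comparison function and its derivatives
  set F : ℝ → ℝ := fun s => φ s θ - C * (s * Real.log s) with hF
  set G : ℝ → ℝ := fun s => φ' s θ - C * (Real.log s + 1) with hG
  have hψ : ∀ s : ℝ, 0 < s → HasDerivAt (fun t => t * Real.log t) (Real.log s + 1) s := by
    intro s hs
    have : HasDerivAt (fun t => t * Real.log t) (1 * Real.log s + s * s⁻¹) s := (hasDerivAt_id s).mul (Real.hasDerivAt_log hs.ne')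
    convert this using 1
    field_simp
  have hFd : ∀ s : ℝ, 0 < s → HasDerivAt F (G s) s := by
    intro s hs
    exact (hd1 θ s hs).sub (((hψ s hs).const_mul C))
  have hGd : ∀ s : ℝ, 0 < s → HasDerivAt G (φ'' s θ - C * s⁻¹) s := by
    intro s hs
    exact (hd2 θ s hs).sub (((Real.hasDerivAt_log hs.ne').add_const 1).const_mul C)
  have hFcont : ContinuousOn F (Set.Ici r₀) := fun x hx =>
    ((hFd x (lt_of_lt_of_le hr₀pos hx)).continuousAt).continuousWithinAt
  have hGcont : ContinuousOn G (Set.Ici r₀) := fun x hx =>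
    ((hGd x (lt_of_lt_of_le hr₀pos hx)).continuousAt).continuousWithinAt
  -- initial values are negative
  have hFr₀ : F r₀ < 0 := by
    have h1 : φ r₀ θ / (r₀ * Real.log r₀) ≤ C - 1 := by
      rw [hC]; simp
    have h2 : (φ r₀ θ / (r₀ * Real.log r₀)) * (r₀ * Real.log r₀) = φ r₀ θ := by
      field_simp
    have hrl : 0 < r₀ * Real.log r₀ := mul_pos hr₀pos hlog₀
    have := mul_le_mul_of_nonneg_right h1 hrl.le
    rw [h2] at this
    simp only [hF]
    nlinarith
  have hGr₀ : G r₀ < 0 := by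
    have h1 : φ' r₀ θ / (Real.log r₀ + 1) ≤ C - 1 := by
      rw [hC]; simp
    have hrl : 0 < Real.log r₀ + 1 := by linarith
    have h2 : (φ' r₀ θ / (Real.log r₀ + 1)) * (Real.log r₀ + 1) = φ' r₀ θ := by
      field_simp
    have := mul_le_mul_of_nonneg_right h1 hrl.le
    rw [h2] at this
    simp only [hG]
    nlinarith
  -- the key differential inequality : F'' ≤ F / (s² log s) for s ≥ r₀
  have hkey : ∀ s : ℝ, r₀ ≤ s → φ'' s θ - C * s⁻¹ ≤ F s / (s ^ 2 * Real.log s) := by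
    intro s hs
    have hs1 : (1:ℝ) < s := lt_of_lt_of_le hr₀ hs
    have hs0 : (0:ℝ) < s := by linarith
    have hlogs : 0 < Real.log s := Real.log_pos hs1
    have hden : 0 < s ^ 2 * Real.log s := by positivity
    have hφpos := hpos θ s hs0
    have hc := hcurv θ s hs
    -- from the curvature bound : φ'' ≤ φ / (s² log s)
    have h1 : φ'' s θ ≤ φ s θ / (s ^ 2 * Real.log s) := by
      have h2 : -(1 / (s ^ 2 * Real.log s)) ≤ -(φ'' s θ) / φ s θ := hc
      have h2' : φ'' s θ / φ s θ ≤ 1 / (s ^ 2 * Real.log s) := by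
        rw [neg_div] at h2; linarith
      rw [div_le_div_iff₀ hφpos hden] at h2'
      rw [le_div_iff₀ hden]
      linarith
    have h3 : C * s⁻¹ = C * (s * Real.log s) / (s ^ 2 * Real.log s) := by
      field_simp
    simp only [hF]
    rw [h3, sub_div]
    have : φ s θ / (s ^ 2 * Real.log s) - C * (s * Real.log s) / (s ^ 2 * Real.log s) ≥
        φ'' s θ - C * (s * Real.log s) / (s ^ 2 * Real.log s) := by linarith
    linarith
  -- suppose for contradiction F r > 0
  by_contra hcon
  push_neg at hcon
  have hFr : 0 < F r := by
    show 0 < φ r θ - C * (r * Real.log r)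
    rw [hC]; linarith
  -- the first point in [r₀, r] where F ≥ 0
  set T : Set ℝ := Set.Icc r₀ r ∩ F ⁻¹' Set.Ici 0 with hT
  have hTclosed : IsClosed T := by
    apply (hFcont.mono (Set.Icc_subset_Ici_self)).preimage_isClosed_of_isClosed
      isClosed_Icc isClosed_Ici
  have hTne : T.Nonempty := ⟨r, ⟨hr, le_refl r⟩, hFr.le⟩
  have hTbdd : BddBelow T := ⟨r₀, fun x hx => hx.1.1⟩
  set r₁ : ℝ := sInf T with hr₁def
  have hr₁mem : r₁ ∈ T := hTclosed.csInf_mem hTne hTbdd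
  have hr₁ge : r₀ ≤ r₁ := hr₁mem.1.1
  have hFr₁ : 0 ≤ F r₁ := hr₁mem.2
  have hr₁gt : r₀ < r₁ := by
    rcases lt_or_eq_of_le hr₁ge with h | h
    · exact h
    · exfalso; rw [← h] at hFr₁; linarith
  -- F < 0 on [r₀, r₁)
  have hFneg : ∀ s, r₀ ≤ s → s < r₁ → F s < 0 := by
    intro s hs1 hs2
    by_contra h
    push_neg at h
    have : s ∈ T := ⟨⟨hs1, le_trans hs2.le hr₁mem.1.2⟩, h⟩
    exact absurd (csInf_le hTbdd this) (not_le.mpr hs2)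
  -- G is antitone on [r₀, r₁]
  have hGanti : AntitoneOn G (Set.Icc r₀ r₁) := by
    apply antitoneOn_of_deriv_nonpos (convex_Icc r₀ r₁)
      (hGcont.mono (Set.Icc_subset_Ici_self))
      (fun x hx => ((hGd x (by rw [interior_Icc] at hx; exact lt_trans hr₀pos hx.1)).differentiableAt.differentiableWithinAt))
    intro x hx
    rw [interior_Icc] at hx
    have hx0 : 0 < x := lt_trans hr₀pos hx.1
    rw [(hGd x hx0).deriv]
    have h1 := hkey x hx.1.le
    have hFx : F x < 0 := hFneg x hx.1.le hx.2
    have hx1 : (1:ℝ) < x := lt_trans hr₀ hx.1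
    have hden : 0 < x ^ 2 * Real.log x := mul_pos (pow_pos hx0 2) (Real.log_pos hx1)
    have : F x / (x ^ 2 * Real.log x) < 0 := div_neg_of_neg_of_pos hFx hden
    linarith
  -- hence G < 0 on [r₀, r₁], so F strictly decreasing
  have hFanti : StrictAntiOn F (Set.Icc r₀ r₁) := by
    apply strictAntiOn_of_deriv_neg (convex_Icc r₀ r₁)
      (hFcont.mono (Set.Icc_subset_Ici_self))
    intro x hx
    rw [interior_Icc] at hx
    have hx0 : 0 < x := lt_trans hr₀pos hx.1
    rw [(hFd x hx0).deriv]
    have := hGanti (Set.left_mem_Icc.mpr hr₁ge) ⟨hx.1.le, hx.2.le⟩ hx.1.le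
    linarith
  have := hFanti (Set.left_mem_Icc.mpr hr₁ge) (Set.right_mem_Icc.mpr hr₁ge) hr₁gt
  linarith
end
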